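/- arXiv:math/0403085 — 2 statements merged into one kernel-verified Lean document; each statement's English description precedes it below -/
import Mathlib

section
/- For any polynomial P_{nm}(x, a_n) = x^{nm} + Σ_j a_j x^{nm−j} with a_j = 0 unless n | j, if Φ satisfies x²Φ''(x) = P_{nm}(x,a_n)Φ(x), then Ψ(x) := x^{(n−1)/(2n)}·Φ((n^{2/m}x)^{1/n}) satisfies x²Ψ''(x) = P_m(x, ã_n)Ψ(x), where P_m(x, ã_n) = x^m + Σ_{j=1}^{m−1} (a_{jn}/n^{2j/m}) x^{m−j} + (−1/4 + (1+4a_{nm})/(4n²)). -/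
open Complex Finset

set_option maxHeartbeats 1000000 in
theorem stmt18 (n m : ℕ) (hn : 0 < n) (hm : 0 < m)
    (a : ℕ → ℂ) (ha : ∀ j, ¬ (n ∣ j) → a j = 0)
    (Φ Φ' Φ'' : ℂ → ℂ)
    (hΦ : ∀ x, HasDerivAt Φ (Φ' x) x)
    (hΦ' : ∀ x, HasDerivAt Φ' (Φ'' x) x)
    (hode : ∀ x, x ^ 2 * Φ'' x
      = (x ^ (n * m) + ∑ j ∈ Finset.Icc 1 (n * m), a j * x ^ (n * m - j)) * Φ x)
    (Ψ : ℂ → ℂ)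
    (hΨ : ∀ x, Ψ x = x ^ (((n : ℂ) - 1) / (2 * (n : ℂ))) *
      Φ (((n : ℂ) ^ ((2 : ℂ) / (m : ℂ)) * x) ^ ((1 : ℂ) / (n : ℂ)))) :
    ∀ x ∈ Complex.slitPlane,
      x ^ 2 * deriv (deriv Ψ) x
        = (x ^ m
            + (∑ j ∈ Finset.Icc 1 (m - 1),
                (a (j * n) / (n : ℂ) ^ ((2 * (j : ℂ)) / (m : ℂ))) * x ^ (m - j))
            + (-1 / 4 + (1 + 4 * a (n * m)) / (4 * (n : ℂ) ^ 2))) * Ψ x := by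
  intro x hx
  set α : ℂ := ((n : ℂ) - 1) / (2 * (n : ℂ)) with hαdef
  set c : ℂ := (n : ℂ) ^ ((2 : ℂ) / (m : ℂ)) with hcdef
  have hn0 : (n : ℂ) ≠ 0 := Nat.cast_ne_zero.mpr hn.ne'
  have hm0 : (m : ℂ) ≠ 0 := Nat.cast_ne_zero.mpr hm.ne'
  have hx0 : x ≠ 0 := Complex.slitPlane_ne_zero hx
  -- c is a positive real
  have hcr : c = (((n : ℝ) ^ ((2 : ℝ) / (m : ℝ)) : ℝ) : ℂ) := by
    rw [Complex.ofReal_cpow (by positivity)]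
    push_cast
    rfl
  have hrpos : (0 : ℝ) < (n : ℝ) ^ ((2 : ℝ) / (m : ℝ)) :=
    Real.rpow_pos_of_pos (by exact_mod_cast hn) _
  have hc0 : c ≠ 0 := by rw [hcr]; exact_mod_cast hrpos.ne'
  have hmul : ∀ z ∈ Complex.slitPlane, c * z ∈ Complex.slitPlane := by
    intro z hz
    rw [Complex.mem_slitPlane_iff] at hz ⊢
    rw [hcr]
    rcases hz with h | h
    · left; rw [Complex.re_ofReal_mul]; exact mul_pos hrpos h
    · right; rw [Complex.im_ofReal_mul]; exact mul_ne_zero hrpos.ne' h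
  -- package of pointwise facts about g z = (c z)^(1/n)
  have pkg : ∀ z ∈ Complex.slitPlane,
      ((c * z) ^ ((1 : ℂ) / (n : ℂ))) ^ n = c * z ∧
      (c * z) ^ ((1 : ℂ) / (n : ℂ)) ≠ 0 ∧
      HasDerivAt (fun w : ℂ => (c * w) ^ ((1 : ℂ) / (n : ℂ)))
        ((c * z) ^ ((1 : ℂ) / (n : ℂ)) * (n : ℂ)⁻¹ * z⁻¹) z := by
    intro z hz
    have hz0 : z ≠ 0 := Complex.slitPlane_ne_zero hz
    have hcz : c * z ∈ Complex.slitPlane := hmul z hz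
    have hcz0 : c * z ≠ 0 := Complex.slitPlane_ne_zero hcz
    have hpow : ((c * z) ^ ((1 : ℂ) / (n : ℂ))) ^ n = c * z := by
      rw [one_div, Complex.cpow_nat_inv_pow _ hn.ne']
    have hne : (c * z) ^ ((1 : ℂ) / (n : ℂ)) ≠ 0 := by
      intro h
      apply hcz0
      rw [← hpow, h, zero_pow hn.ne']
    refine ⟨hpow, hne, ?_⟩
    have hd : HasDerivAt (fun w : ℂ => c * w) (c * 1) z := (hasDerivAt_id z).const_mul c
    have h := hd.cpow_const (c := (1 : ℂ) / (n : ℂ)) hcz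
    convert h using 1
    rw [Complex.cpow_sub _ _ hcz0, Complex.cpow_one]
    field_simp
  have hX : ∀ z ∈ Complex.slitPlane,
      HasDerivAt (fun w : ℂ => w ^ α) (α * z ^ α * z⁻¹) z := by
    intro z hz
    have h := (hasDerivAt_id z).cpow_const (c := α) hz
    refine h.congr_deriv ?_
    simp only [id_eq]
    rw [Complex.cpow_sub _ _ (Complex.slitPlane_ne_zero hz), Complex.cpow_one]
    field_simp
  -- Ψ as an explicit function
  have hΨF : Ψ = fun z => z ^ α * Φ ((c * z) ^ ((1 : ℂ) / (n : ℂ))) := funext hΨ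
  -- first derivative on the slit plane
  set Ψ₁ : ℂ → ℂ := fun z => α * z ^ α * z⁻¹ * Φ ((c * z) ^ ((1 : ℂ) / (n : ℂ)))
      + z ^ α * Φ' ((c * z) ^ ((1 : ℂ) / (n : ℂ))) * ((c * z) ^ ((1 : ℂ) / (n : ℂ))) * (n : ℂ)⁻¹ * z⁻¹
    with hΨ₁def
  have hstep1 : ∀ z ∈ Complex.slitPlane, HasDerivAt Ψ (Ψ₁ z) z := by
    intro z hz
    obtain ⟨hpow, hgne, hgd⟩ := pkg z hz
    have hcomp : HasDerivAt (fun w : ℂ => Φ ((c * w) ^ ((1 : ℂ) / (n : ℂ))))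
        (Φ' ((c * z) ^ ((1 : ℂ) / (n : ℂ))) * ((c * z) ^ ((1 : ℂ) / (n : ℂ)) * (n : ℂ)⁻¹ * z⁻¹)) z := by
      exact (hΦ _).comp z hgd
    have h := ((hX z hz).mul hcomp)
    rw [hΨF]
    refine h.congr_deriv ?_
    simp only [Ψ₁]
    ring
  -- facts at x
  obtain ⟨hpow, hgne, hgd⟩ := pkg x hx
  set y : ℂ := (c * x) ^ ((1 : ℂ) / (n : ℂ)) with hydef
  have hΨx : Ψ x = x ^ α * Φ y := hΨ x
  -- second derivative at x
  have hinv : HasDerivAt (fun z : ℂ => z⁻¹) (-(x ^ 2)⁻¹) x := hasDerivAt_inv hx0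
  have hcomp : HasDerivAt (fun w : ℂ => Φ ((c * w) ^ ((1 : ℂ) / (n : ℂ))))
      (Φ' y * (y * (n : ℂ)⁻¹ * x⁻¹)) x := (hΦ _).comp x hgd
  have hcomp' : HasDerivAt (fun w : ℂ => Φ' ((c * w) ^ ((1 : ℂ) / (n : ℂ))))
      (Φ'' y * (y * (n : ℂ)⁻¹ * x⁻¹)) x := (hΦ' _).comp x hgd
  have hD : HasDerivAt Ψ₁
      ((α * (α * x ^ α * x⁻¹) * x⁻¹ + α * x ^ α * -(x ^ 2)⁻¹) * Φ y
          + α * x ^ α * x⁻¹ * (Φ' y * (y * (n : ℂ)⁻¹ * x⁻¹))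
        + ((((α * x ^ α * x⁻¹ * Φ' y + x ^ α * (Φ'' y * (y * (n : ℂ)⁻¹ * x⁻¹))) * y
              + x ^ α * Φ' y * (y * (n : ℂ)⁻¹ * x⁻¹)) * (n : ℂ)⁻¹) * x⁻¹
            + x ^ α * Φ' y * y * (n : ℂ)⁻¹ * -(x ^ 2)⁻¹)) x := by
    have t1 := ((HasDerivAt.const_mul α (hX x hx)).mul hinv).mul hcomp
    have t2 := ((((hX x hx).mul hcomp').mul hgd).mul_const ((n : ℂ)⁻¹)).mul hinv
    have h := t1.add t2
    exact h
  have heq : deriv Ψ =ᶠ[nhds x] Ψ₁ := by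
    filter_upwards [Complex.isOpen_slitPlane.mem_nhds hx] with z hz
    exact (hstep1 z hz).deriv
  rw [heq.deriv_eq, hD.deriv, hΨx]
  -- abstract the goal sum
  set S : ℂ := ∑ j ∈ Finset.Icc 1 (m - 1),
      (a (j * n) / (n : ℂ) ^ ((2 * (j : ℂ)) / (m : ℂ))) * x ^ (m - j) with hSdef
  have hy0 : y ≠ 0 := hgne
  -- powers of c
  have hclift : ∀ k : ℕ, c ^ k = (n : ℂ) ^ ((2 * (k : ℂ)) / (m : ℂ)) := by
    intro k
    induction k with
    | zero => simp
    | succ k ih =>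
      rw [pow_succ, ih, hcdef, ← Complex.cpow_add _ _ hn0]
      congr 1
      push_cast
      field_simp
  have hc2 : c ^ m = (n : ℂ) ^ 2 := by
    rw [hclift m, show (2 * (m : ℂ)) / (m : ℂ) = ((2 : ℕ) : ℂ) by push_cast; field_simp,
      Complex.cpow_natCast]
  have hyk : ∀ k : ℕ, y ^ (n * k) = c ^ k * x ^ k := by
    intro k
    rw [pow_mul, hpow, mul_pow]
  -- the sum in the ODE for Φ, evaluated at y
  have hS : ∑ j ∈ Finset.Icc 1 (n * m), a j * y ^ (n * m - j)
      = (n : ℂ) ^ 2 * S + a (n * m) := by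
    have hsub : (Finset.Icc 1 m).image (· * n) ⊆ Finset.Icc 1 (n * m) := by
      intro j hj
      simp only [Finset.mem_image, Finset.mem_Icc] at hj ⊢
      obtain ⟨k, ⟨hk1, hk2⟩, rfl⟩ := hj
      exact ⟨le_mul_of_le_of_one_le hk1 hn, by rw [mul_comm]; exact Nat.mul_le_mul_left n hk2⟩
    rw [← Finset.sum_subset hsub (by
      intro j hj hj'
      have haj : a j = 0 := by
        apply ha
        rintro ⟨k, rfl⟩
        apply hj'
        simp only [Finset.mem_Icc] at hj
        simp only [Finset.mem_image, Finset.mem_Icc]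
        refine ⟨k, ⟨?_, ?_⟩, mul_comm k n⟩
        · rcases Nat.eq_zero_or_pos k with h | h
          · subst h; omega
          · exact h
        · exact Nat.le_of_mul_le_mul_left hj.2 hn
      simp [haj])]
    rw [Finset.sum_image (by intro i _ j _ h; exact Nat.eq_of_mul_eq_mul_right hn h)]
    have e1 : m - 1 + 1 = m := by omega
    have hsplit := Finset.sum_Icc_succ_top (a := 1) (b := m - 1) (by omega)
      (fun k => a (k * n) * y ^ (n * m - k * n))
    rw [e1] at hsplit
    rw [hsplit, mul_comm m n, Nat.sub_self, pow_zero, mul_one]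
    congr 1
    rw [hSdef, Finset.mul_sum]
    refine Finset.sum_congr rfl fun k hk => ?_
    simp only [Finset.mem_Icc] at hk
    have hkm : k ≤ m := by omega
    have hidx : n * m - k * n = n * (m - k) := by
      rw [mul_comm k n, ← Nat.mul_sub]
    rw [hidx, hyk (m - k), hclift (m - k), Nat.cast_sub hkm]
    have hne : (n : ℂ) ^ ((2 * (k : ℂ)) / (m : ℂ)) ≠ 0 := by
      simp [Complex.cpow_eq_zero_iff, hn0]
    have hsp : (n : ℂ) ^ ((2 * ((m : ℂ) - (k : ℂ))) / (m : ℂ)) * (n : ℂ) ^ ((2 * (k : ℂ)) / (m : ℂ))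
        = (n : ℂ) ^ 2 := by
      rw [← Complex.cpow_add _ _ hn0,
        show (2 * ((m : ℂ) - (k : ℂ))) / (m : ℂ) + (2 * (k : ℂ)) / (m : ℂ) = ((2 : ℕ) : ℂ) by
          push_cast; field_simp; ring,
        Complex.cpow_natCast]
    field_simp
    linear_combination a (k * n) * hsp
  -- the ODE for Φ at y, in terms of x
  have key : Φ'' y = (((n : ℂ) ^ 2 * (x ^ m + S) + a (n * m)) * Φ y) / y ^ 2 := by
    rw [eq_div_iff (pow_ne_zero 2 hy0)]
    have h := hode y
    rw [hS] at h
    have hlead : y ^ (n * m) = (n : ℂ) ^ 2 * x ^ m := by rw [hyk m, hc2]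
    linear_combination h + Φ y * hlead
  set A : ℂ := x ^ α with hAdef
  clear_value A S y c α
  have step1 : x ^ 2 * ((α * (α * A * x⁻¹) * x⁻¹ + α * A * -(x ^ 2)⁻¹) * Φ y
        + α * A * x⁻¹ * (Φ' y * (y * (n : ℂ)⁻¹ * x⁻¹))
      + ((((α * A * x⁻¹ * Φ' y + A * (Φ'' y * (y * (n : ℂ)⁻¹ * x⁻¹))) * y
            + A * Φ' y * (y * (n : ℂ)⁻¹ * x⁻¹)) * (n : ℂ)⁻¹) * x⁻¹
          + A * Φ' y * y * (n : ℂ)⁻¹ * -(x ^ 2)⁻¹))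
      = A * (α * (α - 1) * Φ y + (2 * α * (n : ℂ)⁻¹ + (n : ℂ)⁻¹ ^ 2 - (n : ℂ)⁻¹) * Φ' y * y
          + (n : ℂ)⁻¹ ^ 2 * y ^ 2 * Φ'' y) := by
    have hx2 : ((x ^ 2)⁻¹ : ℂ) = x⁻¹ * x⁻¹ := by rw [sq, mul_inv]
    have hxu : x * x⁻¹ = 1 := mul_inv_cancel₀ hx0
    linear_combination (A * (α * (α - 1) * Φ y
          + (2 * α * (n : ℂ)⁻¹ + (n : ℂ)⁻¹ ^ 2 - (n : ℂ)⁻¹) * Φ' y * y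
          + (n : ℂ)⁻¹ ^ 2 * y ^ 2 * Φ'' y) * (x * x⁻¹ + 1)) * hxu
      - (x ^ 2 * (α * A * Φ y + A * Φ' y * y * (n : ℂ)⁻¹)) * hx2
  rw [step1, key, hαdef]
  field_simp
  ring
end

section
/- Let f(x) = x^{s}·e^{−x}·Σ_{k=0}^{N} (Γ(p+1)Q_k/Γ(k+p+1))·x^k where s = (1+p)/2, the Q_k ∈ ℂ are defined by Q₀ = 1 and (a₁ + p + 1 + 2k)Q_k = (k+1)Q_{k+1} for 0 ≤ k ≤ N−1, and p + a₁ + 1 = −2N with N ∈ ℕ and p ∉ −ℕ*. Then f satisfies x²f''(x) = (x² + a₁x + a₂)f(x), where a₂ = (p²−1)/4. -/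
open Finset Complex

theorem stmt19 (p a₁ a₂ : ℂ) (N : ℕ)
    (hp : ∀ q : ℕ, 0 < q → p ≠ -(q : ℂ))
    (ha₁ : p + a₁ + 1 = -2 * (N : ℂ))
    (ha₂ : a₂ = (p ^ 2 - 1) / 4)
    (Q : ℕ → ℂ) (hQ0 : Q 0 = 1)
    (hQ : ∀ k, k < N → (a₁ + p + 1 + 2 * (k : ℂ)) * Q k = ((k : ℂ) + 1) * Q (k + 1))
    (f : ℂ → ℂ)
    (hf : ∀ x, f x = x ^ ((1 + p) / 2) * Complex.exp (-x) *
      ∑ k ∈ Finset.range (N + 1),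
        (Complex.Gamma (p + 1) * Q k / Complex.Gamma ((k : ℂ) + p + 1)) * x ^ k) :
    ∀ x ∈ Complex.slitPlane,
      x ^ 2 * deriv (deriv f) x = (x ^ 2 + a₁ * x + a₂) * f x := by
  set s : ℂ := (1 + p) / 2 with hs
  set c : ℕ → ℂ := fun k => Complex.Gamma (p + 1) * Q k / Complex.Gamma ((k : ℂ) + p + 1)
    with hc
  set g : ℂ → ℂ := fun y => ∑ k ∈ Finset.range (N + 1), c k * y ^ k with hgdef
  set G1 : ℂ → ℂ := fun y => ∑ k ∈ Finset.range (N + 1), c k * ((k : ℂ) * y ^ (k - 1))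
    with hG1def
  set G2 : ℂ → ℂ := fun y =>
      ∑ k ∈ Finset.range (N + 1), c k * ((k : ℂ) * (((k - 1 : ℕ) : ℂ) * y ^ (k - 1 - 1)))
    with hG2def
  -- Gamma values are nonzero
  have hGam : ∀ k : ℕ, Complex.Gamma ((k : ℂ) + p + 1) ≠ 0 := by
    intro k
    apply Complex.Gamma_ne_zero
    intro m hm
    have : p = -((m + k + 1 : ℕ) : ℂ) := by push_cast; linear_combination hm
    exact hp (m + k + 1) (Nat.succ_pos _) this
  -- the key coefficient recursion
  have hterm : ∀ j : ℕ, j < N →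
      ((j : ℂ) + 1) * (((j : ℂ) + 1) + p) * c (j + 1) + 2 * ((N : ℂ) - (j : ℂ)) * c j = 0 := by
    intro j hj
    have hz : ((j : ℂ) + p + 1) ≠ 0 := by
      intro h
      exact hp (j + 1) (Nat.succ_pos _) (by push_cast; linear_combination h)
    have hrec : Complex.Gamma (((j + 1 : ℕ) : ℂ) + p + 1)
        = ((j : ℂ) + p + 1) * Complex.Gamma ((j : ℂ) + p + 1) := by
      push_cast
      have := Complex.Gamma_add_one ((j : ℂ) + p + 1) hz
      rw [← this]; ring_nf
    have hQj := hQ j hj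
    have hNj : a₁ + p + 1 + 2 * (j : ℂ) = -2 * ((N : ℂ) - (j : ℂ)) := by
      linear_combination ha₁
    have hq2 : ((j : ℂ) + 1) * Q (j + 1) = -2 * ((N : ℂ) - (j : ℂ)) * Q j := by
      rw [← hQj, hNj]
    have hG1 := hGam j
    simp only [hc]
    rw [hrec]
    field_simp
    push_cast
    linear_combination Complex.Gamma (p + 1) * (((j : ℂ) + 1) + p) * hq2
  -- the key polynomial identity
  have key : ∀ x : ℂ,
      x * G2 x + (1 + p) * G1 x - 2 * x * G1 x + 2 * (N : ℂ) * g x = 0 := by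
    intro x
    have h2 : x * G2 x
        = ∑ k ∈ Finset.range (N + 1), ((k : ℂ) * ((k : ℂ) - 1) * c k) * x ^ (k - 1) := by
      rw [hG2def, Finset.mul_sum]
      refine Finset.sum_congr rfl fun k _ => ?_
      match k with
      | 0 => simp
      | 1 => simp
      | (m + 2) => push_cast; ring
    have h1 : x * G1 x = ∑ k ∈ Finset.range (N + 1), ((k : ℂ) * c k) * x ^ k := by
      rw [hG1def, Finset.mul_sum]
      refine Finset.sum_congr rfl fun k _ => ?_
      match k with
      | 0 => simp
      | (m + 1) => push_cast; ring
    have hA : x * G2 x + (1 + p) * G1 x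
        = ∑ k ∈ Finset.range (N + 1), ((k : ℂ) * ((k : ℂ) + p) * c k) * x ^ (k - 1) := by
      rw [h2, hG1def, Finset.mul_sum, ← Finset.sum_add_distrib]
      refine Finset.sum_congr rfl fun k _ => ?_
      ring
    have hB : 2 * (N : ℂ) * g x - 2 * x * G1 x
        = ∑ k ∈ Finset.range (N + 1), (2 * ((N : ℂ) - (k : ℂ)) * c k) * x ^ k := by
      rw [show (2 : ℂ) * x * G1 x = 2 * (x * G1 x) by ring, h1, hgdef, Finset.mul_sum,
        Finset.mul_sum, ← Finset.sum_sub_distrib]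
      refine Finset.sum_congr rfl fun k _ => ?_
      ring
    have hA' : x * G2 x + (1 + p) * G1 x
        = ∑ i ∈ Finset.range N, (((i : ℂ) + 1) * (((i : ℂ) + 1) + p) * c (i + 1)) * x ^ i := by
      rw [hA, Finset.sum_range_succ']
      simp only [Nat.cast_zero, zero_mul, mul_zero, zero_add, add_zero]
      refine Finset.sum_congr rfl fun i _ => ?_
      simp only [Nat.add_sub_cancel]
      push_cast
      ring
    have hB' : 2 * (N : ℂ) * g x - 2 * x * G1 x
        = ∑ k ∈ Finset.range N, (2 * ((N : ℂ) - (k : ℂ)) * c k) * x ^ k := by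
      rw [hB, Finset.sum_range_succ]
      simp
    have : x * G2 x + (1 + p) * G1 x - 2 * x * G1 x + 2 * (N : ℂ) * g x
        = (x * G2 x + (1 + p) * G1 x) + (2 * (N : ℂ) * g x - 2 * x * G1 x) := by ring
    rw [this, hA', hB', ← Finset.sum_add_distrib]
    refine Finset.sum_eq_zero fun i hi => ?_
    have := hterm i (Finset.mem_range.1 hi)
    linear_combination x ^ i * this
  -- derivatives of the polynomial part
  have hgd : ∀ y : ℂ, HasDerivAt g (G1 y) y := by
    intro y
    exact HasDerivAt.fun_sum fun k _ => (hasDerivAt_pow k y).const_mul (c k)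
  have hG1d : ∀ y : ℂ, HasDerivAt G1 (G2 y) y := by
    intro y
    exact HasDerivAt.fun_sum fun k _ =>
      (((hasDerivAt_pow (k - 1) y).const_mul ((k : ℂ))).const_mul (c k))
  -- derivatives of the exponential-polynomial part
  have hed : ∀ y : ℂ, HasDerivAt (fun z : ℂ => Complex.exp (-z)) (-Complex.exp (-y)) y := by
    intro y
    simpa using (hasDerivAt_neg y).cexp
  have hHd : ∀ y : ℂ, HasDerivAt (fun z => Complex.exp (-z) * g z)
      (Complex.exp (-y) * (G1 y - g y)) y := by
    intro y
    have := (hed y).fun_mul (hgd y)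
    exact this.congr_deriv (by ring)
  have hH1d : ∀ y : ℂ, HasDerivAt (fun z => Complex.exp (-z) * (G1 z - g z))
      (Complex.exp (-y) * (G2 y - 2 * G1 y + g y)) y := by
    intro y
    have := (hed y).fun_mul ((hG1d y).fun_sub (hgd y))
    exact this.congr_deriv (by ring)
  -- rewrite f
  have hfeq : f = fun y => y ^ s * (Complex.exp (-y) * g y) := by
    funext y
    rw [hf y]
    simp only [hgdef, hc]
    ring
  intro x hx
  have hx0 : x ≠ 0 := Complex.slitPlane_ne_zero hx
  -- first derivative on the slit plane
  set F1 : ℂ → ℂ := fun y =>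
      s * y ^ (s - 1) * (Complex.exp (-y) * g y) + y ^ s * (Complex.exp (-y) * (G1 y - g y))
    with hF1def
  have hfd : ∀ y ∈ Complex.slitPlane, HasDerivAt f (F1 y) y := by
    intro y hy
    rw [hfeq]
    have hcp : HasDerivAt (fun z : ℂ => z ^ s) (s * y ^ (s - 1)) y :=
      (Complex.hasStrictDerivAt_cpow_const hy).hasDerivAt
    exact hcp.mul (hHd y)
  have hderiv1 : Set.EqOn (deriv f) F1 Complex.slitPlane := fun y hy => (hfd y hy).deriv
  have hev : deriv f =ᶠ[nhds x] F1 :=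
    Filter.eventuallyEq_of_mem (Complex.isOpen_slitPlane.mem_nhds hx) hderiv1
  have hdd : deriv (deriv f) x = deriv F1 x := hev.deriv_eq
  -- second derivative
  have hF1d : HasDerivAt F1
      ((s * ((s - 1) * x ^ (s - 1 - 1)) * (Complex.exp (-x) * g x)
          + s * x ^ (s - 1) * (Complex.exp (-x) * (G1 x - g x)))
        + (s * x ^ (s - 1) * (Complex.exp (-x) * (G1 x - g x))
          + x ^ s * (Complex.exp (-x) * (G2 x - 2 * G1 x + g x)))) x := by
    have hcp1 : HasDerivAt (fun z : ℂ => s * z ^ (s - 1)) (s * ((s - 1) * x ^ (s - 1 - 1))) x :=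
      ((Complex.hasStrictDerivAt_cpow_const hx).hasDerivAt).const_mul s
    have hcp2 : HasDerivAt (fun z : ℂ => z ^ s) (s * x ^ (s - 1)) x :=
      (Complex.hasStrictDerivAt_cpow_const hx).hasDerivAt
    exact (hcp1.mul (hHd x)).add (hcp2.mul (hH1d x))
  rw [hdd, hF1d.deriv, show f x = x ^ s * (Complex.exp (-x) * g x) from by rw [hfeq]]
  -- cpow algebra
  have e1 : x ^ (s - 1) = x ^ (s - 1 - 1) * x := by
    have h := Complex.cpow_add (s - 1 - 1) 1 hx0
    rw [Complex.cpow_one] at h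
    rw [← h]
    congr 1
    ring
  have e2 : x ^ s = x ^ (s - 1 - 1) * x ^ (2 : ℕ) := by
    have h := Complex.cpow_add (s - 1 - 1) 2 hx0
    rw [show (2 : ℂ) = ((2 : ℕ) : ℂ) by norm_num, Complex.cpow_natCast] at h
    rw [← h]
    congr 1
    push_cast
    ring
  rw [e1, e2]
  have ha₁' : a₁ = -2 * (N : ℂ) - p - 1 := by linear_combination ha₁
  rw [ha₂, ha₁', hs]
  linear_combination (x ^ 3 * x ^ (s - 1 - 1) * Complex.exp (-x)) * key x
end
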